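/- Let P be a partial order on {1,…,n} and let k ≥ 0 be an integer. Then the number of linear extensions of P with exactly k descents equals Σ_{i=0}^{k} (−1)^i · C(n+1, i) · Ω_P(k−i), where C(a,b) denotes the binomial coefficient. -/

import Mathlib

/-!
Stanley's fundamental lemma: every `f : Fin n → ℕ` is compatible with exactly one permutation,
the one sorting the pairs `(f x, x)` lexicographically, and `f` is a `P`-partition iff that
permutation is a linear extension of `P`. Hence `Ω_P(k)` is the sum over linear extensions `π`
of the number of `π`-compatible `f ≤ k`. Adding to `f (π i)` the number of non-descents of `π`
before `i` turns such an `f` into a strictly increasing sequence in `[0, k + n - des π)`, so that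
number is `C(k + n - des π, n)`, the coefficient of `x^k` in `x^(des π) / (1 - x)^(n + 1)`.
Multiplying the generating series of `Ω_P` by `(1 - x)^(n + 1)` therefore leaves `∑_π x^(des π)`.
-/

/-- The number of descents of a permutation `π` of `{0, …, n-1}`:
indices `i` with `i + 1 < n` and `π (i+1) < π i`. -/
noncomputable def descentCount {n : ℕ} (π : Equiv.Perm (Fin n)) : ℕ :=
  Nat.card {i : Fin n // ∃ h : (i : ℕ) + 1 < n, π ⟨(i : ℕ) + 1, h⟩ < π i}

/-- `f` is a `P`-partition for the partial order `P`: for `i ≺_P j`,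
`f i ≤ f j` if `i < j` in the natural order, and `f i < f j` if `i > j`. -/
def IsPPartition {n : ℕ} (P : PartialOrder (Fin n)) (f : Fin n → ℕ) : Prop :=
  ∀ i j : Fin n, P.lt i j → ((i < j → f i ≤ f j) ∧ (j < i → f i < f j))

/-- `Ω_P(k)`: the number of `P`-partitions with all values at most `k`. -/
noncomputable def orderPoly {n : ℕ} (P : PartialOrder (Fin n)) (k : ℕ) : ℕ :=
  Nat.card {f : Fin n → ℕ // IsPPartition P f ∧ ∀ x, f x ≤ k}

/-- `π` is a linear extension of the partial order `P`: `i ≺_P j` implies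
`i` appears before `j` in the word `π(0) π(1) ⋯ π(n-1)`. -/
def IsLinearExtension {n : ℕ} (P : PartialOrder (Fin n)) (π : Equiv.Perm (Fin n)) : Prop :=
  ∀ i j : Fin n, P.lt i j → π.symm i < π.symm j

/-- `f` is `π`-compatible: `f (π 0) ≤ f (π 1) ≤ ⋯`, with strict inequality
at every descent of `π`. -/
def PiCompatible {n : ℕ} (π : Equiv.Perm (Fin n)) (f : Fin n → ℕ) : Prop :=
  ∀ (i : Fin n) (h : (i : ℕ) + 1 < n),
    f (π i) ≤ f (π ⟨(i : ℕ) + 1, h⟩) ∧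
      (π ⟨(i : ℕ) + 1, h⟩ < π i → f (π i) < f (π ⟨(i : ℕ) + 1, h⟩))

open Finset PowerSeries

theorem PowerSeries.coeff_one_sub_X_pow {R : Type*} [CommRing R] (N i : ℕ) :
    coeff i ((1 - X : R⟦X⟧) ^ N) = (-1) ^ i * (N.choose i : R) := by
  have hexpand :
      (1 - X : R⟦X⟧) ^ N = ∑ j ∈ range (N + 1), C ((-1) ^ j * (N.choose j : R)) * X ^ j := by
    rw [sub_eq_neg_add, ← neg_one_mul, add_pow]
    refine sum_congr rfl fun j _ => ?_
    simp only [one_pow, mul_one, mul_pow, map_mul, map_pow, map_neg, map_one, map_natCast]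
    ring
  rw [hexpand, map_sum]
  simp only [coeff_C_mul_X_pow]
  rw [sum_ite_eq]
  split_ifs with h
  · rfl
  · rw [Nat.choose_eq_zero_of_lt (by simpa using h), Nat.cast_zero, mul_zero]

theorem PowerSeries.coeff_X_pow_mul_invOneSubPow {R : Type*} [CommRing R] {n d : ℕ} (hd : d ≤ n)
    (m : ℕ) : coeff m (X ^ d * (invOneSubPow R (n + 1)).val) = ((m + n - d).choose n : R) := by
  rw [coeff_X_pow_mul', invOneSubPow_val_succ_eq_mk_add_choose, coeff_mk]
  split_ifs with h
  · rw [add_comm, Nat.sub_add_comm h]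
  · rw [Nat.choose_eq_zero_of_lt (by omega), Nat.cast_zero]

theorem sum_range_neg_one_pow_mul_choose_mul_choose {n d : ℕ} (hd : d ≤ n) (k : ℕ) :
    ∑ i ∈ range (k + 1), (-1 : ℤ) ^ i * ((n + 1).choose i : ℤ) * ((k - i + n - d).choose n : ℤ) =
      if d = k then 1 else 0 := by
  have h := congrArg (coeff k) <| show
    (1 - X : ℤ⟦X⟧) ^ (n + 1) * (X ^ d * (invOneSubPow ℤ (n + 1)).val) = X ^ d by
    rw [mul_left_comm, ← invOneSubPow_inv_eq_one_sub_pow, Units.inv_val, mul_one]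
  rw [coeff_mul, Nat.sum_antidiagonal_eq_sum_range_succ_mk, coeff_X_pow] at h
  simpa only [coeff_one_sub_X_pow, coeff_X_pow_mul_invOneSubPow hd, eq_comm (a := k)] using h

theorem Fin.strictMono_iff_lt_of_add_one_lt {n : ℕ} {α : Type*} [Preorder α] {c : Fin n → α} :
    StrictMono c ↔ ∀ (i : Fin n) (h : (i : ℕ) + 1 < n), c i < c ⟨i + 1, h⟩ := by
  cases n with
  | zero => simp [Subsingleton.strictMono]
  | succ m =>
    rw [Fin.strictMono_iff_lt_succ]
    exact ⟨fun h i hi => h ⟨i, by omega⟩, fun h i => h i.castSucc (by simp)⟩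

theorem Fin.val_le_orderEmbedding_apply {n N : ℕ} (c : Fin n ↪o Fin N) (i : Fin n) :
    (i : ℕ) ≤ c i := by
  simpa using card_le_card_of_injOn c (s := Iio i) (t := Iio (c i))
    (fun j hj => by simpa using hj) c.injective.injOn

theorem Fin.orderEmbedding_apply_add_le {n N : ℕ} (c : Fin n ↪o Fin N) (i : Fin n) :
    (c i : ℕ) + (n - i) ≤ N := by
  have := card_le_card_of_injOn c (s := Ioi i) (t := Ioi (c i))
    (fun j hj => by simpa using hj) c.injective.injOn
  simp only [Fin.card_Ioi] at this
  omega

section Descents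

variable {n : ℕ} (π : Equiv.Perm (Fin n))

def descents : Finset (Fin n) := {i | ∃ h : (i : ℕ) + 1 < n, π ⟨i + 1, h⟩ < π i}

def descentsBefore (i : Fin n) : ℕ := #(descents π ∩ Iio i)

theorem descentCount_eq_card_descents : descentCount π = #(descents π) := by
  rw [descentCount, Nat.card_eq_fintype_card, Fintype.card_subtype, descents]

theorem descentCount_le : descentCount π ≤ n := by
  rw [descentCount_eq_card_descents]
  exact (card_le_univ _).trans_eq (Fintype.card_fin n)

theorem descentsBefore_le (i : Fin n) : descentsBefore π i ≤ i :=
  (card_le_card inter_subset_right).trans (Fin.card_Iio i).le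

theorem descentsBefore_le_card_descents (i : Fin n) : descentsBefore π i ≤ #(descents π) :=
  card_le_card inter_subset_left

theorem card_descents_le (i : Fin n) : #(descents π) ≤ descentsBefore π i + (n - 1 - i) := by
  have hsub : descents π ⊆ (descents π ∩ Iio i) ∪ Ico i ⟨n - 1, by have := i.isLt; omega⟩ := by
    intro j hj
    obtain ⟨hj1, -⟩ := by simpa [descents] using hj
    rcases lt_or_ge j i with hji | hji
    · exact mem_union_left _ (mem_inter.2 ⟨hj, mem_Iio.2 hji⟩)
    · exact mem_union_right _ (mem_Ico.2 ⟨hji, Fin.lt_def.2 (by simp only; omega)⟩)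
  calc #(descents π) ≤ descentsBefore π i + #(Ico i ⟨n - 1, by have := i.isLt; omega⟩) :=
        (card_le_card hsub).trans (card_union_le _ _)
    _ = descentsBefore π i + (n - 1 - i) := by rw [Fin.card_Ico]

theorem descentsBefore_succ (i : Fin n) (h : (i : ℕ) + 1 < n) :
    descentsBefore π ⟨i + 1, h⟩ = descentsBefore π i + if π ⟨i + 1, h⟩ < π i then 1 else 0 := by
  have hIio : Iio (⟨i + 1, h⟩ : Fin n) = insert i (Iio i) := by
    ext j; simp [Fin.lt_def]
  have hmem : i ∈ descents π ↔ π ⟨i + 1, h⟩ < π i := by simp [descents, h]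
  rw [descentsBefore, descentsBefore, hIio]
  split_ifs with hd
  · rw [inter_insert_of_mem (hmem.2 hd), card_insert_of_notMem (by simp)]
  · rw [inter_insert_of_notMem (mt hmem.1 hd), add_zero]

end Descents

section Compatible

variable {n : ℕ} {π : Equiv.Perm (Fin n)}

theorem piCompatible_iff_strictMono {f : Fin n → ℕ} :
    PiCompatible π f ↔ StrictMono fun i => f (π i) + i - descentsBefore π i := by
  rw [Fin.strictMono_iff_lt_of_add_one_lt]
  refine forall_congr' fun i => forall_congr' fun h => ?_
  have := descentsBefore_le π i
  rw [descentsBefore_succ]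
  split_ifs with hd <;> simp only [hd, true_imp_iff, false_imp_iff, and_true] <;> omega

variable (π) in
def piCompatibleEquiv (k : ℕ) :
    {f : Fin n → ℕ // PiCompatible π f ∧ ∀ x, f x ≤ k} ≃
      (Fin n ↪o Fin (k + n - #(descents π))) where
  toFun f := OrderEmbedding.ofStrictMono
    (fun i => ⟨f.1 (π i) + i - descentsBefore π i, by
      have := f.2.2 (π i); have := card_descents_le π i; have := descentsBefore_le π i; omega⟩)
    fun _ _ hij => Fin.mk_lt_mk.2 <| (piCompatible_iff_strictMono.1 f.2.1).lt_iff_lt.2 hij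
  invFun c := ⟨fun x => c (π.symm x) + descentsBefore π (π.symm x) - π.symm x,
    piCompatible_iff_strictMono.2 <| by
      convert Fin.val_strictMono.comp c.strictMono using 1
      funext i
      have := Fin.val_le_orderEmbedding_apply c i
      simp only [π.symm_apply_apply, Function.comp_apply]
      omega,
    fun x => by
      have := Fin.orderEmbedding_apply_add_le c (π.symm x)
      have := descentsBefore_le_card_descents π (π.symm x)
      dsimp only
      omega⟩
  left_inv f := by
    ext x
    have := descentsBefore_le π (π.symm x)
    change f.1 (π (π.symm x)) + π.symm x - descentsBefore π (π.symm x)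
      + descentsBefore π (π.symm x) - π.symm x = f.1 x
    rw [π.apply_symm_apply]
    omega
  right_inv c := by
    ext i
    have := Fin.val_le_orderEmbedding_apply c i
    simp only [OrderEmbedding.coe_ofStrictMono, π.symm_apply_apply]
    omega

theorem card_piCompatible (π : Equiv.Perm (Fin n)) (k : ℕ) :
    Nat.card {f : Fin n → ℕ // PiCompatible π f ∧ ∀ x, f x ≤ k} =
      (k + n - descentCount π).choose n := by
  rw [Nat.card_congr (piCompatibleEquiv π k), Nat.card_congr Set.powersetCard.ofFinEmbEquiv,
    Set.powersetCard.card, Nat.card_fin, descentCount_eq_card_descents]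

end Compatible

section Sorting

variable {n : ℕ}

theorem toLex_lt_toLex_iff_sort_symm_lt {α : Type*} [LinearOrder α] (f : Fin n → α)
    (i j : Fin n) :
    toLex (f i, i) < toLex (f j, j) ↔ (Tuple.sort f).symm i < (Tuple.sort f).symm j := by
  have hsort := Tuple.eq_sort_iff'.1 (rfl : Tuple.sort f = Tuple.sort f)
  rw [← hsort.lt_iff_lt]
  simp only [Equiv.trans_apply, Equiv.apply_symm_apply]
  rfl

theorem piCompatible_iff_eq_sort {π : Equiv.Perm (Fin n)} {f : Fin n → ℕ} :
    PiCompatible π f ↔ π = Tuple.sort f := by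
  rw [Tuple.eq_sort_iff', Fin.strictMono_iff_lt_of_add_one_lt]
  refine forall₂_congr fun i h => ?_
  have hne : (π i : ℕ) ≠ π ⟨i + 1, h⟩ :=
    Fin.val_ne_of_ne (π.injective.ne (by simp [Fin.ext_iff]))
  change _ ↔ toLex (f (π i), π i) < toLex (f (π ⟨i + 1, h⟩), π ⟨i + 1, h⟩)
  simp only [Prod.Lex.toLex_lt_toLex, Fin.lt_def]
  omega

theorem isPPartition_iff_toLex_lt (P : PartialOrder (Fin n)) (f : Fin n → ℕ) :
    IsPPartition P f ↔ ∀ i j, P.lt i j → toLex (f i, i) < toLex (f j, j) := by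
  refine forall₂_congr fun i j => imp_congr_right fun hij => ?_
  have hne : (i : ℕ) ≠ j := Fin.val_ne_of_ne fun h => (@lt_irrefl _ P.toPreorder i) (h ▸ hij)
  -- otherwise `omega` reads `hij : P.lt i j` as `i < j` in `Fin n`
  clear hij
  simp only [Prod.Lex.toLex_lt_toLex, Fin.lt_def]
  omega

theorem isPPartition_iff_isLinearExtension_sort (P : PartialOrder (Fin n)) (f : Fin n → ℕ) :
    IsPPartition P f ↔ IsLinearExtension P (Tuple.sort f) := by
  simp only [isPPartition_iff_toLex_lt, toLex_lt_toLex_iff_sort_symm_lt, IsLinearExtension]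

end Sorting

theorem natCard_bounded_eq_card_filter {n : ℕ} (p : (Fin n → ℕ) → Prop) [DecidablePred p]
    (k : ℕ) :
    Nat.card {f : Fin n → ℕ // p f ∧ ∀ x, f x ≤ k} =
      #{f ∈ Fintype.piFinset fun _ => range (k + 1) | p f} := by
  rw [← Nat.card_eq_finsetCard]
  exact Nat.card_congr <| Equiv.subtypeEquivRight fun f => by simp [and_comm]

theorem orderPoly_eq_sum_card_piCompatible {n : ℕ} (P : PartialOrder (Fin n))
    [DecidablePred (IsLinearExtension P)] (k : ℕ) :
    orderPoly P k = ∑ π with IsLinearExtension P π,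
      Nat.card {f : Fin n → ℕ // PiCompatible π f ∧ ∀ x, f x ≤ k} := by
  classical
  rw [orderPoly, natCard_bounded_eq_card_filter, card_eq_sum_card_fiberwise (f := Tuple.sort)
    (t := {π | IsLinearExtension P π}) fun f hf => by
      simpa [← isPPartition_iff_isLinearExtension_sort] using (mem_filter.1 hf).2]
  refine sum_congr rfl fun π hπ => ?_
  rw [natCard_bounded_eq_card_filter, filter_filter]
  refine congrArg card (filter_congr fun f _ => ?_)
  rw [piCompatible_iff_eq_sort, eq_comm, and_iff_right_iff_imp]
  rintro rfl
  exact (isPPartition_iff_isLinearExtension_sort P f).2 (mem_filter.1 hπ).2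

theorem pEulerian_eq_alternating_sum_general (n : ℕ) (P : PartialOrder (Fin n)) (k : ℕ) :
    (Nat.card {π : Equiv.Perm (Fin n) //
        IsLinearExtension P π ∧ descentCount π = k} : ℤ) =
      ∑ i ∈ Finset.range (k + 1),
        (-1 : ℤ) ^ i * ((n + 1).choose i : ℤ) * (orderPoly P (k - i) : ℤ) := by
  classical
  have horderPoly (m : ℕ) : (orderPoly P m : ℤ) =
      ∑ π with IsLinearExtension P π, ((m + n - descentCount π).choose n : ℤ) := by
    simp [orderPoly_eq_sum_card_piCompatible, card_piCompatible]
  simp_rw [horderPoly, mul_sum]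
  rw [sum_comm, Nat.card_eq_fintype_card, Fintype.card_subtype, ← filter_filter, ← sum_boole]
  refine sum_congr rfl fun π _ => ?_
  rw [sum_range_neg_one_pow_mul_choose_mul_choose (descentCount_le π)]

theorem pEulerian_eq_alternating_sum (n : ℕ) (hn : 1 ≤ n) (P : PartialOrder (Fin n)) (k : ℕ) :
    (Nat.card {π : Equiv.Perm (Fin n) //
        IsLinearExtension P π ∧ descentCount π = k} : ℤ) =
      ∑ i ∈ Finset.range (k + 1),
        (-1 : ℤ) ^ i * ((n + 1).choose i : ℤ) * (orderPoly P (k - i) : ℤ) :=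
  pEulerian_eq_alternating_sum_general n P k
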